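/- arXiv:2406.19198 — 7 statements merged into one kernel-verified Lean document; each statement's English description precedes it below -/
import Mathlib

section
/- Generalised divergence Borel–Cantelli lemma: Let (X, 𝒜, μ) be a probability space and let {E_i}_{i∈ℕ} be a sequence of measurable subsets of X. Suppose there exist constants C' > 0 and c > 0 and a sequence of finite subsets S_k ⊆ ℕ with min S_k → +∞ as k → ∞, such that for all sufficiently large k one has ∑_{i∈S_k} μ(E_i) ≥ c and ∑_{s<t, s,t∈S_k} μ(E_s ∩ E_t) ≤ C' (∑_{i∈S_k} μ(E_i))². Then μ(E_∞) ≥ 1/(2C' + c⁻¹). -/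
open MeasureTheory Filter Topology
open scoped ENNReal

/-! Chung–Erdős: by Cauchy–Schwarz applied to the counting function `∑ i ∈ u, 𝟙 (E i)` on
`⋃ i ∈ u, E i`, this union has measure at least `(∑ μ E_i)² / ∑_{s,t} μ (E_s ∩ E_t)`, and the
double sum is `∑ μ E_i + 2 ∑_{s<t} μ (E_s ∩ E_t)`. For `u = S_k` with `k` large the hypotheses turn
this into `μ (⋃ i ∈ S_k, E i) ≥ 1 / (2C' + c⁻¹)`. As `min S_k → ∞`, these unions lie in
arbitrarily late tails `⋃ i ≥ N, E i`, whose measures decrease to `μ (limsup E)`. -/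

theorem sq_lintegral_le_measure_univ_mul_lintegral_sq {X : Type*} [MeasurableSpace X]
    (μ : Measure X) {f : X → ℝ≥0∞} (hf : AEMeasurable f μ) :
    (∫⁻ x, f x ∂μ) ^ 2 ≤ μ Set.univ * ∫⁻ x, f x ^ 2 ∂μ := by
  have holder := ENNReal.lintegral_mul_le_Lp_mul_Lq μ Real.HolderConjugate.two_two
    aemeasurable_const hf (f := 1) (g := f)
  simp only [Pi.mul_apply, Pi.one_apply, one_mul, one_pow, lintegral_one,
    ENNReal.rpow_two] at holder
  calc (∫⁻ x, f x ∂μ) ^ 2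
      ≤ (μ Set.univ ^ (1 / 2 : ℝ) * (∫⁻ x, f x ^ 2 ∂μ) ^ (1 / 2 : ℝ)) ^ 2 := by gcongr
    _ = μ Set.univ * ∫⁻ x, f x ^ 2 ∂μ := by
        simp only [mul_pow, ← ENNReal.rpow_natCast, ← ENNReal.rpow_mul]
        norm_num

section

variable {X ι : Type*} [MeasurableSpace X] (μ : Measure X) {E : ι → Set X}

theorem lintegral_sum_indicator_one (hE : ∀ i, MeasurableSet (E i)) (u : Finset ι) :
    ∫⁻ x, ∑ i ∈ u, (E i).indicator 1 x ∂μ = ∑ i ∈ u, μ (E i) := by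
  rw [lintegral_finsetSum _ fun i _ => measurable_one.indicator (hE i)]
  simp only [lintegral_indicator_one (hE _)]

theorem lintegral_sq_sum_indicator_one (hE : ∀ i, MeasurableSet (E i)) (u : Finset ι) :
    ∫⁻ x, (∑ i ∈ u, (E i).indicator 1 x) ^ 2 ∂μ = ∑ s ∈ u, ∑ t ∈ u, μ (E s ∩ E t) := by
  have hsq : ∀ x, (∑ i ∈ u, (E i).indicator (1 : X → ℝ≥0∞) x) ^ 2
      = ∑ s ∈ u, ∑ t ∈ u, (E s ∩ E t).indicator 1 x := by
    intro x
    simp only [sq, Finset.sum_mul_sum, Set.inter_indicator_one, Pi.mul_apply]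
  simp only [hsq]
  rw [lintegral_finsetSum _ fun s _ => Finset.measurable_sum _ fun t _ =>
    measurable_one.indicator ((hE s).inter (hE t))]
  refine Finset.sum_congr rfl fun s _ => ?_
  exact lintegral_sum_indicator_one μ (fun t => (hE s).inter (hE t)) u

theorem sq_sum_measure_le_measure_biUnion_mul_sum_measure_inter
    (hE : ∀ i, MeasurableSet (E i)) (u : Finset ι) :
    (∑ i ∈ u, μ (E i)) ^ 2 ≤ μ (⋃ i ∈ u, E i) * ∑ s ∈ u, ∑ t ∈ u, μ (E s ∩ E t) := by
  have hf : Measurable fun x => ∑ i ∈ u, (E i).indicator (1 : X → ℝ≥0∞) x :=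
    Finset.measurable_sum _ fun i _ => measurable_one.indicator (hE i)
  have hmass : ∫⁻ x in ⋃ i ∈ u, E i, ∑ i ∈ u, (E i).indicator 1 x ∂μ = ∑ i ∈ u, μ (E i) := by
    rw [lintegral_sum_indicator_one _ hE]
    refine Finset.sum_congr rfl fun i hi => ?_
    rw [Measure.restrict_apply (hE i), Set.inter_eq_left.mpr (Finset.subset_set_biUnion_of_mem hi)]
  calc (∑ i ∈ u, μ (E i)) ^ 2
      ≤ μ.restrict (⋃ i ∈ u, E i) Set.univ *
          ∫⁻ x in ⋃ i ∈ u, E i, (∑ i ∈ u, (E i).indicator 1 x) ^ 2 ∂μ := by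
        rw [← hmass]
        exact sq_lintegral_le_measure_univ_mul_lintegral_sq _ hf.aemeasurable
    _ ≤ μ (⋃ i ∈ u, E i) * ∑ s ∈ u, ∑ t ∈ u, μ (E s ∩ E t) := by
        rw [Measure.restrict_apply_univ, ← lintegral_sq_sum_indicator_one μ hE]
        gcongr
        exact Measure.restrict_le_self

end

theorem Finset.sum_sum_eq_sum_add_two_nsmul_sum_sum_lt {ι M : Type*} [LinearOrder ι]
    [AddCommMonoid M] (u : Finset ι) (g : ι → ι → M) (hg : ∀ s t, g s t = g t s) :
    ∑ s ∈ u, ∑ t ∈ u, g s t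
      = ∑ s ∈ u, g s s + 2 • ∑ s ∈ u, ∑ t ∈ u, if s < t then g s t else 0 := by
  have hsplit : ∀ s t, g s t = (if s = t then g s t else 0) + (if s < t then g s t else 0)
      + (if t < s then g t s else 0) := by
    intro s t
    rcases lt_trichotomy s t with h | rfl | h
    · simp [h, h.ne, h.not_gt]
    · simp
    · simp [h, h.ne', h.not_gt, hg s t]
  have hswap : ∑ s ∈ u, ∑ t ∈ u, (if t < s then g t s else 0)
      = ∑ s ∈ u, ∑ t ∈ u, if s < t then g s t else 0 := Finset.sum_comm
  simp [Finset.sum_congr rfl fun s _ => Finset.sum_congr rfl fun t _ => hsplit s t,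
    Finset.sum_add_distrib, hswap, two_nsmul, add_assoc]

theorem sq_sum_measureReal_le_measureReal_biUnion_mul {X ι : Type*} [MeasurableSpace X]
    (μ : Measure X) [IsFiniteMeasure μ] [LinearOrder ι] {E : ι → Set X}
    (hE : ∀ i, MeasurableSet (E i)) (u : Finset ι) :
    (∑ i ∈ u, μ.real (E i)) ^ 2 ≤ μ.real (⋃ i ∈ u, E i) *
      (∑ i ∈ u, μ.real (E i) + 2 * ∑ s ∈ u, ∑ t ∈ u, if s < t then μ.real (E s ∩ E t) else 0) := by
  have h := ENNReal.toReal_mono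
    (ENNReal.mul_ne_top (measure_ne_top _ _) (by simp [ENNReal.sum_eq_top]))
    (sq_sum_measure_le_measure_biUnion_mul_sum_measure_inter μ hE u)
  simp (disch := simp [ENNReal.sum_eq_top]) only [ENNReal.toReal_pow, ENNReal.toReal_mul,
    ENNReal.toReal_sum, ← measureReal_def] at h
  rw [Finset.sum_sum_eq_sum_add_two_nsmul_sum_sum_lt u _ fun s t => by rw [Set.inter_comm],
    nsmul_eq_mul, Nat.cast_ofNat] at h
  simpa only [Set.inter_self] using h

theorem one_div_le_of_sq_le_mul_add {x c m C P : ℝ} (hc : 0 < c) (hcx : c ≤ x) (hm : 0 ≤ m)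
    (hP : P ≤ C * x ^ 2) (h : x ^ 2 ≤ m * (x + 2 * P)) : 1 / (2 * C + c⁻¹) ≤ m := by
  have hx : 0 < x := hc.trans_le hcx
  have hx' : 1 ≤ m * (2 * C + x⁻¹) := by
    calc 1 ≤ m * (x + 2 * (C * x ^ 2)) / x ^ 2 := by
          rw [le_div_iff₀ (by positivity), one_mul]
          exact h.trans (by gcongr)
      _ = m * (2 * C + x⁻¹) := by field_simp; ring
  have hmc : 1 ≤ m * (2 * C + c⁻¹) := hx'.trans (by gcongr)
  rw [div_le_iff₀ (pos_of_mul_pos_right (one_pos.trans_le hmc) hm)]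
  linarith

theorem le_measureReal_limsup_atTop {X : Type*} [MeasurableSpace X] (μ : Measure X)
    [IsFiniteMeasure μ] {E : ℕ → Set X} (hE : ∀ i, NullMeasurableSet (E i) μ) {b : ℝ}
    (h : ∀ N, b ≤ μ.real (⋃ i ≥ N, E i)) : b ≤ μ.real (limsup E atTop) := by
  have htails : Tendsto (fun N => μ (⋃ i ≥ N, E i)) atTop (𝓝 (μ (limsup E atTop))) := by
    rw [limsup_eq_iInf_iSup_of_nat]
    exact tendsto_measure_iInter_atTop (fun N => .biUnion (Set.to_countable _) fun i _ => hE i)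
      (fun m n hmn => Set.iUnion₂_mono' fun i hi => ⟨i, hmn.trans hi, subset_rfl⟩)
      ⟨0, measure_ne_top _ _⟩
  exact ge_of_tendsto' ((ENNReal.tendsto_toReal (measure_ne_top _ _)).comp htails) h

theorem generalised_divergence_borel_cantelli_general
    {X : Type*} [MeasurableSpace X] (μ : Measure X) [IsProbabilityMeasure μ]
    (E : ℕ → Set X) (hE : ∀ i, MeasurableSet (E i))
    (C' c : ℝ) (hc : 0 < c)
    (S : ℕ → Finset ℕ)
    (hmin : ∀ N : ℕ, ∀ᶠ k in atTop, ∀ i ∈ S k, N ≤ i)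
    (hmass : ∀ᶠ k in atTop, c ≤ ∑ i ∈ S k, (μ (E i)).toReal)
    (hpair : ∀ᶠ k in atTop,
      ∑ s ∈ S k, ∑ t ∈ S k, (if s < t then (μ (E s ∩ E t)).toReal else 0)
        ≤ C' * (∑ i ∈ S k, (μ (E i)).toReal) ^ 2) :
    1 / (2 * C' + c⁻¹) ≤ (μ (limsup E atTop)).toReal := by
  refine le_measureReal_limsup_atTop μ (fun i => (hE i).nullMeasurableSet) fun N => ?_
  obtain ⟨k, hN, hck, hpk⟩ := ((hmin N).and (hmass.and hpair)).exists
  calc 1 / (2 * C' + c⁻¹) ≤ μ.real (⋃ i ∈ S k, E i) :=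
        one_div_le_of_sq_le_mul_add hc hck measureReal_nonneg hpk
          (sq_sum_measureReal_le_measureReal_biUnion_mul μ hE (S k))
    _ ≤ μ.real (⋃ i ≥ N, E i) :=
        measureReal_mono (Set.iUnion₂_mono' fun i hi => ⟨i, hN i hi, subset_rfl⟩)
          (measure_ne_top _ _)

/-- **Generalised divergence Borel--Cantelli lemma.** -/
theorem generalised_divergence_borel_cantelli
    {X : Type*} [MeasurableSpace X] (μ : Measure X) [IsProbabilityMeasure μ]
    (E : ℕ → Set X) (hE : ∀ i, MeasurableSet (E i))
    (C' c : ℝ) (hC' : 0 < C') (hc : 0 < c)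
    (S : ℕ → Finset ℕ)
    (hmin : ∀ N : ℕ, ∀ᶠ k in atTop, ∀ i ∈ S k, N ≤ i)
    (hmass : ∀ᶠ k in atTop, c ≤ ∑ i ∈ S k, (μ (E i)).toReal)
    (hpair : ∀ᶠ k in atTop,
      ∑ s ∈ S k, ∑ t ∈ S k, (if s < t then (μ (E s ∩ E t)).toReal else 0)
        ≤ C' * (∑ i ∈ S k, (μ (E i)).toReal) ^ 2) :
    1 / (2 * C' + c⁻¹) ≤ (μ (limsup E atTop)).toReal :=
  generalised_divergence_borel_cantelli_general μ E hE C' c hc S hmin hmass hpair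
end

section
/- Let (X, 𝒜, μ) be a probability space and let {E_i}_{i∈ℕ} be a sequence of measurable subsets of X. Suppose that ∑_{i=1}^∞ μ(E_i) = ∞ and that there exists a constant C > 0 such that ∑_{s,t=1}^Q μ(E_s ∩ E_t) ≤ C (∑_{s=1}^Q μ(E_s))² for infinitely many Q ∈ ℕ. In addition, suppose property (M1) holds: for any δ > 0 and any natural numbers q₁ < q₂, setting A = ⋃_{j=q₁}^{q₂} E_j, there exists i₀ = i₀(q₁,q₂,δ) such that for all i ≥ i₀ one has μ(A ∩ E_i) ≤ (1+δ) μ(A) μ(E_i). Then μ(E_∞) = 1. -/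
/-!
If `α = μ (limsup E) < 1`, pick `ε > 0` small, then `q₁` with `μ (⋃ i ≥ q₁, E i) < α + ε` and
`q₂ > q₁` such that `A = ⋃ j ∈ [q₁, q₂], E j` misses less than `ε` of that tail. By (M1), for large
`i` the pruned set `E i \ A` keeps the proportion `η = 1 - (1 + ε) (α + ε)` of `E i`, so the pruned
sets inherit the quasi-independence bound with constant `C / η²`. The Chung–Erdős inequality then
gives them a union of measure at least `η² / C`; but that union lies in `(⋃ i ≥ q₁, E i) \ A`, of
measure less than `ε`, which is absurd for `ε` small.
-/

open MeasureTheory Filter Set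
open scoped ENNReal Topology

namespace MeasureTheory

variable {X ι : Type*} [MeasurableSpace X]

theorem sq_lintegral_le_measure_univ_mul_lintegral_sq (ν : Measure X) {f : X → ℝ≥0∞}
    (hf : AEMeasurable f ν) : (∫⁻ x, f x ∂ν) ^ 2 ≤ ν univ * ∫⁻ x, f x ^ 2 ∂ν := by
  have h := ENNReal.lintegral_mul_le_Lp_mul_Lq ν Real.HolderConjugate.two_two
    aemeasurable_const hf (f := fun _ => 1)
  simp only [Pi.mul_apply, one_mul, lintegral_const, one_pow, ENNReal.rpow_two] at h
  calc (∫⁻ x, f x ∂ν) ^ 2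
      ≤ ((ν univ) ^ (1 / 2 : ℝ) * (∫⁻ x, f x ^ 2 ∂ν) ^ (1 / 2 : ℝ)) ^ 2 := by gcongr
    _ = ν univ * ∫⁻ x, f x ^ 2 ∂ν := by
      rw [mul_pow, ← ENNReal.rpow_mul_natCast, ← ENNReal.rpow_mul_natCast]
      norm_num

theorem sq_sum_measure_le_measure_univ_mul_sum_sum_measure_inter (ν : Measure X)
    {F : ι → Set X} (hF : ∀ i, MeasurableSet (F i)) (s : Finset ι) :
    (∑ i ∈ s, ν (F i)) ^ 2 ≤ ν univ * ∑ i ∈ s, ∑ j ∈ s, ν (F i ∩ F j) := by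
  have hmeas : ∀ t : Set X, MeasurableSet t → Measurable (t.indicator (1 : X → ℝ≥0∞)) :=
    fun t ht => measurable_one.indicator ht
  set f : X → ℝ≥0∞ := fun x => ∑ i ∈ s, (F i).indicator 1 x
  have hint : ∫⁻ x, f x ∂ν = ∑ i ∈ s, ν (F i) := by
    simp only [f, lintegral_finsetSum _ fun i _ => hmeas _ (hF i), lintegral_indicator_one (hF _)]
  have hint_sq : ∫⁻ x, f x ^ 2 ∂ν = ∑ i ∈ s, ∑ j ∈ s, ν (F i ∩ F j) := by
    have hsq : ∀ x, f x ^ 2 = ∑ i ∈ s, ∑ j ∈ s, (F i ∩ F j).indicator 1 x := fun x => by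
      simp only [f, sq, Finset.sum_mul_sum, Set.inter_indicator_one, Pi.mul_apply]
    simp only [hsq, lintegral_finsetSum' _ fun i _ => (Finset.measurable_sum _ fun j _ =>
      hmeas _ ((hF i).inter (hF j))).aemeasurable, lintegral_finsetSum' _ fun j _ =>
      (hmeas _ ((hF _).inter (hF j))).aemeasurable, lintegral_indicator_one ((hF _).inter (hF _))]
  rw [← hint, ← hint_sq]
  exact sq_lintegral_le_measure_univ_mul_lintegral_sq ν
    (Finset.measurable_sum _ fun i _ => hmeas _ (hF i)).aemeasurable

/-- The Chung–Erdős inequality. -/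
theorem sq_sum_measure_le_measure_biUnion_mul_sum_sum_measure_inter (μ : Measure X)
    {F : ι → Set X} (hF : ∀ i, MeasurableSet (F i)) (s : Finset ι) :
    (∑ i ∈ s, μ (F i)) ^ 2 ≤ μ (⋃ i ∈ s, F i) * ∑ i ∈ s, ∑ j ∈ s, μ (F i ∩ F j) := by
  set U := ⋃ i ∈ s, F i
  calc (∑ i ∈ s, μ (F i)) ^ 2 = (∑ i ∈ s, μ.restrict U (F i)) ^ 2 := by
        congr 1
        exact Finset.sum_congr rfl fun i hi =>
          (μ.restrict_eq_self (subset_biUnion_of_mem (u := F) hi)).symm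
    _ ≤ μ.restrict U univ * ∑ i ∈ s, ∑ j ∈ s, μ.restrict U (F i ∩ F j) :=
        sq_sum_measure_le_measure_univ_mul_sum_sum_measure_inter _ hF s
    _ ≤ μ U * ∑ i ∈ s, ∑ j ∈ s, μ (F i ∩ F j) := by
        rw [Measure.restrict_apply_univ]
        gcongr
        exact Measure.restrict_le_self

theorem sq_sum_measureReal_le_measureReal_biUnion_mul_sum_sum_measureReal_inter (μ : Measure X)
    [IsFiniteMeasure μ] {F : ι → Set X} (hF : ∀ i, MeasurableSet (F i)) (s : Finset ι) :
    (∑ i ∈ s, μ.real (F i)) ^ 2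
      ≤ μ.real (⋃ i ∈ s, F i) * ∑ i ∈ s, ∑ j ∈ s, μ.real (F i ∩ F j) := by
  have h := ENNReal.toReal_mono (ENNReal.mul_ne_top (measure_ne_top _ _) (by simp))
    (sq_sum_measure_le_measure_biUnion_mul_sum_sum_measure_inter μ hF s)
  simp only [ENNReal.toReal_pow, ENNReal.toReal_mul,
    ENNReal.toReal_sum fun i _ => measure_ne_top _ _,
    ENNReal.toReal_sum fun i _ => ENNReal.sum_ne_top.2 fun j _ => measure_ne_top _ _] at h
  exact h

variable {μ : Measure X} [IsFiniteMeasure μ]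

theorem tendsto_measureReal_biUnion_Icc (E : ℕ → Set X) (n : ℕ) :
    Tendsto (fun m => μ.real (⋃ j ∈ Finset.Icc n m, E j)) atTop (𝓝 (μ.real (⋃ i ≥ n, E i))) := by
  have hmono : Monotone fun m => ⋃ j ∈ Finset.Icc n m, E j := fun a b hab =>
    biUnion_subset_biUnion_left fun j hj => by
      simp only [Finset.coe_Icc, mem_Icc] at hj ⊢
      exact ⟨hj.1, hj.2.trans hab⟩
  have hunion : ⋃ m, ⋃ j ∈ Finset.Icc n m, E j = ⋃ i ≥ n, E i := by
    ext x
    simp only [mem_iUnion, Finset.mem_Icc]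
    exact ⟨fun ⟨_, j, ⟨hnj, _⟩, hx⟩ => ⟨j, hnj, hx⟩,
      fun ⟨j, hnj, hx⟩ => ⟨j, j, ⟨hnj, le_rfl⟩, hx⟩⟩
  have h := tendsto_measure_iUnion_atTop (μ := μ) hmono
  rw [hunion] at h
  exact (ENNReal.tendsto_toReal (measure_ne_top _ _)).comp h

variable {E : ℕ → Set X}

theorem tendsto_sum_range_measureReal_atTop (hdiv : ∑' i, μ (E i) = ∞) :
    Tendsto (fun n => ∑ i ∈ Finset.range n, μ.real (E i)) atTop atTop := by
  refine (not_summable_iff_tendsto_nat_atTop_of_nonneg fun i => measureReal_nonneg).1 fun h => ?_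
  have := ENNReal.ofReal_tsum_of_nonneg (fun i => measureReal_nonneg) h
  rw [tsum_congr fun i => ofReal_measureReal] at this
  exact ENNReal.ofReal_ne_top (this.trans hdiv)

theorem tendsto_measureReal_biUnion_ge_limsup (hE : ∀ i, MeasurableSet (E i)) :
    Tendsto (fun n => μ.real (⋃ i ≥ n, E i)) atTop (𝓝 (μ.real (limsup E atTop))) := by
  have hanti : Antitone fun n => ⋃ i ≥ n, E i := fun m n hmn =>
    iUnion₂_mono' fun i hi => ⟨i, hmn.trans hi, subset_rfl⟩
  have h := tendsto_measure_iInter_atTop (μ := μ)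
    (fun n => (MeasurableSet.biUnion (to_countable _) fun i _ => hE i).nullMeasurableSet) hanti
    ⟨0, measure_ne_top _ _⟩
  rw [limsup_eq_iInf_iSup_of_nat]
  simp only [iSup_eq_iUnion, iInf_eq_iInter]
  exact (ENNReal.tendsto_toReal (measure_ne_top _ _)).comp h

theorem sq_mul_sum_Ico_le_measureReal_biUnion_ge_diff_mul (hE : ∀ i, MeasurableSet (E i))
    {A : Set X} (hA : MeasurableSet A) {η : ℝ} (hη : 0 ≤ η) {n Q : ℕ}
    (hprune : ∀ i ∈ Finset.Ico n Q, η * μ.real (E i) ≤ μ.real (E i \ A)) :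
    (η * ∑ i ∈ Finset.Ico n Q, μ.real (E i)) ^ 2
      ≤ μ.real ((⋃ i ≥ n, E i) \ A)
        * ∑ s ∈ Finset.range Q, ∑ t ∈ Finset.range Q, μ.real (E s ∩ E t) := by
  have hIco : Finset.Ico n Q ⊆ Finset.range Q := fun i hi =>
    Finset.mem_range.2 (Finset.mem_Ico.1 hi).2
  calc (η * ∑ i ∈ Finset.Ico n Q, μ.real (E i)) ^ 2
      ≤ (∑ i ∈ Finset.Ico n Q, μ.real (E i \ A)) ^ 2 := by
        rw [Finset.mul_sum]
        gcongr with i hi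
        exact hprune i hi
    _ ≤ μ.real (⋃ i ∈ Finset.Ico n Q, E i \ A)
          * ∑ i ∈ Finset.Ico n Q, ∑ j ∈ Finset.Ico n Q, μ.real ((E i \ A) ∩ (E j \ A)) :=
        sq_sum_measureReal_le_measureReal_biUnion_mul_sum_sum_measureReal_inter μ
          (fun i => (hE i).diff hA) _
    _ ≤ μ.real ((⋃ i ≥ n, E i) \ A)
          * ∑ i ∈ Finset.Ico n Q, ∑ j ∈ Finset.Ico n Q, μ.real (E i ∩ E j) := by
        gcongr
        · exact measure_ne_top _ _
        · exact iUnion₂_subset fun i hi => sdiff_subset_sdiff_left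
            (subset_iUnion₂ (s := fun i (_ : i ≥ n) => E i) i (Finset.mem_Ico.1 hi).1)
        · exact measure_ne_top _ _
        all_goals exact sdiff_subset
    _ ≤ μ.real ((⋃ i ≥ n, E i) \ A)
          * ∑ s ∈ Finset.range Q, ∑ t ∈ Finset.range Q, μ.real (E s ∩ E t) := by
        gcongr
        refine (Finset.sum_le_sum fun _ _ => Finset.sum_le_sum_of_subset_of_nonneg hIco
          fun _ _ _ => measureReal_nonneg).trans ?_
        exact Finset.sum_le_sum_of_subset_of_nonneg hIco fun _ _ _ =>
          Finset.sum_nonneg fun _ _ => measureReal_nonneg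

theorem sq_le_mul_measureReal_biUnion_ge_diff (hE : ∀ i, MeasurableSet (E i))
    (hdiv : Tendsto (fun n => ∑ i ∈ Finset.range n, μ.real (E i)) atTop atTop) {C : ℝ}
    (hC : 0 ≤ C) (hquasi : ∃ᶠ Q in atTop,
      ∑ s ∈ Finset.range Q, ∑ t ∈ Finset.range Q, μ.real (E s ∩ E t)
        ≤ C * (∑ s ∈ Finset.range Q, μ.real (E s)) ^ 2)
    {A : Set X} (hA : MeasurableSet A) {η : ℝ} (hη : 0 ≤ η)
    (hprune : ∀ᶠ i in atTop, η * μ.real (E i) ≤ μ.real (E i \ A)) (n₀ : ℕ) :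
    η ^ 2 ≤ C * μ.real ((⋃ i ≥ n₀, E i) \ A) := by
  obtain ⟨m, hm⟩ := eventually_atTop.1 hprune
  set n := max n₀ m
  have htail : (⋃ i ≥ n, E i) \ A ⊆ (⋃ i ≥ n₀, E i) \ A :=
    sdiff_subset_sdiff_left (iUnion₂_mono' fun i hi => ⟨i, le_of_max_le_left hi, subset_rfl⟩)
  refine le_trans ?_ (mul_le_mul_of_nonneg_left (measureReal_mono htail) hC)
  set S : ℕ → ℝ := fun Q => ∑ i ∈ Finset.range Q, μ.real (E i)
  have hlim : Tendsto (fun Q => (η * (1 - S n / S Q)) ^ 2) atTop (𝓝 (η ^ 2)) := by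
    simpa using (((tendsto_const_nhds (x := (1 : ℝ))).sub
      (tendsto_const_nhds (x := S n).div_atTop hdiv)).const_mul η).pow 2
  refine le_of_tendsto_of_frequently hlim ((hquasi.and_eventually
    ((eventually_ge_atTop n).and (hdiv.eventually_gt_atTop 0))).mono ?_)
  rintro Q ⟨hQquasi, hQn, hQpos⟩
  have h := (sq_mul_sum_Ico_le_measureReal_biUnion_ge_diff_mul hE hA hη (n := n) (Q := Q)
    fun i hi => hm i (le_of_max_le_right (Finset.mem_Ico.1 hi).1)).trans
    (mul_le_mul_of_nonneg_left hQquasi measureReal_nonneg)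
  rw [Finset.sum_Ico_eq_sub _ hQn] at h
  have hS : (η * (1 - S n / S Q)) ^ 2 = (η * (S Q - S n)) ^ 2 / S Q ^ 2 := by field_simp
  rw [hS, div_le_iff₀ (by positivity)]
  linarith [mul_comm (μ.real ((⋃ i ≥ n, E i) \ A)) (C * S Q ^ 2)]

end MeasureTheory

theorem exists_pos_mul_lt_one_and_mul_lt_sq {α : ℝ} (hα : α < 1) (C : ℝ) :
    ∃ ε > 0, (1 + ε) * (α + ε) < 1 ∧ C * ε < (1 - (1 + ε) * (α + ε)) ^ 2 := by
  have hcont : Continuous fun ε : ℝ => (1 + ε) * (α + ε) := by fun_prop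
  have h₁ : ∀ᶠ ε in 𝓝 0, (1 + ε) * (α + ε) < 1 :=
    hcont.continuousAt.eventually_lt continuousAt_const (by simpa using hα)
  have h₂ : ∀ᶠ ε in 𝓝 0, C * ε < (1 - (1 + ε) * (α + ε)) ^ 2 :=
    (continuous_const.mul continuous_id).continuousAt.eventually_lt
      ((continuous_const.sub hcont).pow 2).continuousAt (by simp; nlinarith)
  obtain ⟨ε, ⟨h₁, h₂⟩, hε⟩ :=
    (((h₁.and h₂).filter_mono (nhdsWithin_le_nhds (s := Ioi 0))).and self_mem_nhdsWithin).exists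
  exact ⟨ε, hε, h₁, h₂⟩

/-- **Divergence Borel--Cantelli with property (M1) gives full measure** (Theorem 1). -/
theorem divergence_borel_cantelli_M1_full_measure
    {X : Type*} [MeasurableSpace X] (μ : Measure X) [IsProbabilityMeasure μ]
    (E : ℕ → Set X) (hE : ∀ i, MeasurableSet (E i))
    (hdiv : ∑' i, μ (E i) = ⊤)
    (C : ℝ) (hC : 0 < C)
    (hquasi : ∃ᶠ Q in atTop,
      ∑ s ∈ Finset.range Q, ∑ t ∈ Finset.range Q, (μ (E s ∩ E t)).toReal
        ≤ C * (∑ s ∈ Finset.range Q, (μ (E s)).toReal) ^ 2)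
    (hM1 : ∀ δ : ℝ, 0 < δ → ∀ q₁ q₂ : ℕ, q₁ < q₂ →
      ∃ i₀ : ℕ, ∀ i ≥ i₀,
        (μ ((⋃ j ∈ Finset.Icc q₁ q₂, E j) ∩ E i)).toReal
          ≤ (1 + δ) * (μ (⋃ j ∈ Finset.Icc q₁ q₂, E j)).toReal * (μ (E i)).toReal) :
    μ (limsup E atTop) = 1 := by
  simp only [← measureReal_def] at hquasi hM1
  suffices μ.real (limsup E atTop) = 1 by rwa [measureReal_def, ENNReal.toReal_eq_one_iff] at this
  refine le_antisymm measureReal_le_one (not_lt.1 fun hα => ?_)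
  set α := μ.real (limsup E atTop)
  obtain ⟨ε, hε, hη, hCε⟩ := exists_pos_mul_lt_one_and_mul_lt_sq hα C
  obtain ⟨q₁, hq₁⟩ := ((tendsto_measureReal_biUnion_ge_limsup hE).eventually_lt_const
    (lt_add_of_pos_right α hε)).exists
  obtain ⟨q₂, hq₂, hq₁₂⟩ := (((tendsto_measureReal_biUnion_Icc (μ := μ) E q₁).eventually_const_lt
    (sub_lt_self _ hε)).and (eventually_gt_atTop q₁)).exists
  set A := ⋃ j ∈ Finset.Icc q₁ q₂, E j
  have hA : MeasurableSet A := Finset.measurableSet_biUnion _ fun j _ => hE j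
  have hAtail : A ⊆ ⋃ i ≥ q₁, E i :=
    iUnion₂_mono' fun j hj => ⟨j, (Finset.mem_Icc.1 hj).1, subset_rfl⟩
  have hAle : μ.real A ≤ α + ε := (measureReal_mono hAtail (measure_ne_top _ _)).trans hq₁.le
  have hprune : ∀ᶠ i in atTop, (1 - (1 + ε) * (α + ε)) * μ.real (E i) ≤ μ.real (E i \ A) := by
    obtain ⟨i₀, hi₀⟩ := hM1 ε hε q₁ q₂ hq₁₂
    filter_upwards [eventually_ge_atTop i₀] with i hi
    have hsplit := measureReal_inter_add_sdiff (μ := μ) (s := E i) hA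
    have hM : μ.real (E i ∩ A) ≤ (1 + ε) * (α + ε) * μ.real (E i) := by
      rw [inter_comm]
      exact (hi₀ i hi).trans (by gcongr)
    linarith
  have key := sq_le_mul_measureReal_biUnion_ge_diff hE (tendsto_sum_range_measureReal_atTop hdiv)
    hC.le hquasi hA (by linarith) hprune q₁
  have hD : μ.real ((⋃ i ≥ q₁, E i) \ A) < ε := by
    rw [measureReal_sdiff hAtail hA (measure_ne_top _ _)]
    linarith
  linarith [mul_lt_mul_of_pos_left hD hC]
end

section
/- Let (X, 𝒜, μ) be a probability space and let {E_i}_{i∈ℕ} be a sequence of measurable subsets of X. Suppose there exists 0 < c₀ < 1 such that the following holds: for any δ > 0 and every pair of integers q₁ < q₂, setting A = ⋃_{j=q₁}^{q₂} E_j, there is an infinite subset I ⊆ ℕ and i₀ = i₀(q₁,q₂,δ) such that inf{μ(E_i) : i ∈ I} > c₀ and for all i ∈ I with i ≥ i₀ one has μ(A ∩ E_i) ≤ (1+δ) μ(A) μ(E_i). Then μ(E_∞) = 1. -/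
open MeasureTheory Filter Topology ENNReal

/-- **Full measure from property (M1-I)** (Theorem 4). -/
theorem borel_cantelli_M1I_full_measure
    {X : Type*} [MeasurableSpace X] (μ : Measure X) [IsProbabilityMeasure μ]
    (E : ℕ → Set X) (hE : ∀ i, MeasurableSet (E i))
    (c₀ : ℝ) (hc₀ : 0 < c₀) (hc₀1 : c₀ < 1)
    (hM1I : ∀ δ : ℝ, 0 < δ → ∀ q₁ q₂ : ℕ, q₁ < q₂ →
      ∃ I : Set ℕ, I.Infinite ∧ ∃ i₀ : ℕ,
        c₀ < sInf ((fun i => (μ (E i)).toReal) '' I) ∧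
        ∀ i ∈ I, i₀ ≤ i →
          (μ ((⋃ j ∈ Finset.Icc q₁ q₂, E j) ∩ E i)).toReal
            ≤ (1 + δ) * (μ (⋃ j ∈ Finset.Icc q₁ q₂, E j)).toReal * (μ (E i)).toReal) :
    μ (limsup E atTop) = 1 := by
  set B : ℕ → Set X := fun n => ⋃ i, ⋃ (_ : n ≤ i), E i with hBdef
  have hBmeas : ∀ n, MeasurableSet (B n) := fun n =>
    MeasurableSet.iUnion fun i => MeasurableSet.iUnion fun _ => hE i
  have hB1 : ∀ n, μ (B n) = 1 := by
    intro n
    set A : ℕ → Set X := fun q => ⋃ j ∈ Finset.Icc n q, E j with hAdef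
    have hAmeas : ∀ q, MeasurableSet (A q) := fun q =>
      (Finset.Icc n q).measurableSet_biUnion fun j _ => hE j
    have hAsub : ∀ q, A q ⊆ B n := by
      intro q x hx
      simp only [hAdef, Set.mem_iUnion, hBdef] at hx ⊢
      obtain ⟨j, hj, hxj⟩ := hx
      exact ⟨j, (Finset.mem_Icc.mp hj).1, hxj⟩
    have hAmono : Monotone A := by
      intro p q hpq
      apply Set.iUnion₂_subset
      intro j hj
      exact Set.subset_iUnion₂ (s := fun j _ => E j) j
        (Finset.mem_Icc.mpr ⟨(Finset.mem_Icc.mp hj).1,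
          le_trans (Finset.mem_Icc.mp hj).2 hpq⟩)
    have hUnion : ⋃ q, A q = B n := by
      apply subset_antisymm (Set.iUnion_subset fun q => hAsub q)
      intro x hx
      simp only [hBdef, Set.mem_iUnion] at hx
      obtain ⟨i, hi, hxi⟩ := hx
      exact Set.mem_iUnion.mpr ⟨i, Set.mem_iUnion₂.mpr
        ⟨i, Finset.mem_Icc.mpr ⟨hi, le_rfl⟩, hxi⟩⟩
    set b : ℝ := (μ (B n)).toReal with hb
    have htend : Tendsto (fun q => (μ (A q)).toReal) atTop (𝓝 b) := by
      have h1 := tendsto_measure_iUnion_atTop (μ := μ) hAmono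
      rw [hUnion] at h1
      exact (ENNReal.tendsto_toReal (measure_ne_top μ _)).comp h1
    -- key inequality for fixed δ and q
    have key : ∀ δ : ℝ, 0 < δ → ∀ q : ℕ, n < q →
        c₀ * (1 - (1 + δ) * (μ (A q)).toReal) ≤ b - (μ (A q)).toReal := by
      intro δ hδ q hq
      obtain ⟨I, hIinf, i₀, hinf, hbound⟩ := hM1I δ hδ n q hq
      obtain ⟨i, hiI, hilt⟩ := hIinf.exists_gt (max i₀ n)
      have hi₀ : i₀ ≤ i := le_trans (le_max_left _ _) hilt.le
      have hni : n ≤ i := le_trans (le_max_right _ _) hilt.le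
      have he : c₀ < (μ (E i)).toReal := by
        refine lt_of_lt_of_le hinf (csInf_le ?_ ⟨i, hiI, rfl⟩)
        exact ⟨0, fun y hy => by
          obtain ⟨j, _, rfl⟩ := hy; exact ENNReal.toReal_nonneg⟩
      have hbd := hbound i hiI hi₀
      set a : ℝ := (μ (A q)).toReal with ha
      set e : ℝ := (μ (E i)).toReal with heq
      -- μ (E i ∩ A q) + μ (E i \ A q) = μ (E i)
      have h1 : (μ (E i ∩ A q)).toReal + (μ (E i \ A q)).toReal = e := by
        rw [← ENNReal.toReal_add (measure_ne_top μ _) (measure_ne_top μ _),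
          measure_inter_add_diff _ (hAmeas q)]
      have hcomm : (μ (A q ∩ E i)).toReal = (μ (E i ∩ A q)).toReal := by
        rw [Set.inter_comm]
      -- μ (B n ∩ A q) + μ (B n \ A q) = μ (B n); B n ∩ A q = A q
      have h3 : a + (μ (B n \ A q)).toReal = b := by
        rw [hb, ← measure_inter_add_diff (B n) (hAmeas q),
          Set.inter_eq_self_of_subset_right (hAsub q),
          ENNReal.toReal_add (measure_ne_top μ _) (measure_ne_top μ _)]
      have hEiB : E i ⊆ B n := Set.subset_iUnion₂ (s := fun i _ => E i) i hni
      have h2 : (μ (E i \ A q)).toReal ≤ (μ (B n \ A q)).toReal :=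
        ENNReal.toReal_mono (measure_ne_top μ _)
          (measure_mono (Set.diff_subset_diff_left hEiB))
      rw [hcomm] at hbd
      rcases le_or_gt 0 (1 - (1 + δ) * a) with hsg | hsg
      · nlinarith
      · have hd : (0:ℝ) ≤ (μ (B n \ A q)).toReal := ENNReal.toReal_nonneg
        nlinarith
    -- pass q → ∞ : for all δ > 0, c₀ * (1 - (1+δ) b) ≤ 0
    have key2 : ∀ δ : ℝ, 0 < δ → 1 ≤ (1 + δ) * b := by
      intro δ hδ
      have hlim : Tendsto
          (fun q => (b - (μ (A q)).toReal) - c₀ * (1 - (1 + δ) * (μ (A q)).toReal))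
          atTop (𝓝 ((b - b) - c₀ * (1 - (1 + δ) * b))) :=
        (tendsto_const_nhds.sub htend).sub
          ((tendsto_const_nhds.sub (htend.const_mul _)).const_mul c₀)
      have h0 : (0:ℝ) ≤ (b - b) - c₀ * (1 - (1 + δ) * b) := by
        refine ge_of_tendsto hlim ?_
        filter_upwards [eventually_ge_atTop (n + 1)] with q hq
        have := key δ hδ q (Nat.lt_of_lt_of_le (Nat.lt_succ_self n) hq)
        linarith
      nlinarith
    -- conclude b = 1
    have hble : μ (B n) ≤ 1 := prob_le_one
    have hb1 : (1:ℝ) ≤ b := by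
      by_contra h
      push_neg at h
      have hb0 : (0:ℝ) ≤ b := ENNReal.toReal_nonneg
      rcases eq_or_lt_of_le hb0 with h0 | h0
      · have := key2 1 one_pos; nlinarith
      · have hδ : (0:ℝ) < (1 - b) / (2 * b) := div_pos (by linarith) (by linarith)
        have := key2 _ hδ
        have h2b : (1 + (1 - b) / (2 * b)) * b = b + (1 - b) / 2 := by
          field_simp
        nlinarith
    have hbl : b ≤ 1 := by
      have h := ENNReal.toReal_mono (by simp : (1:ENNReal) ≠ ⊤) hble
      simpa [hb] using h
    exact (ENNReal.toReal_eq_one_iff _).mp (le_antisymm hbl hb1)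
  -- limsup = ⋂ n, B n
  have hls : limsup E atTop = ⋂ n, B n := by
    rw [limsup_eq_iInf_iSup_of_nat]
    simp only [hBdef]
    rfl
  rw [hls]
  have hcompl : μ ((⋂ n, B n)ᶜ) = 0 := by
    rw [Set.compl_iInter]
    refine measure_iUnion_null fun n => ?_
    rw [measure_compl (hBmeas n) (measure_ne_top μ _), hB1 n, measure_univ, tsub_self]
  have := measure_add_measure_compl (μ := μ) (MeasurableSet.iInter hBmeas)
  rw [hcompl, add_zero, measure_univ] at this
  exact this
end

section
/- Reduction lemma: Let (X, 𝒜, μ) be a probability space, {E_i}_{i∈ℕ} a sequence of measurable subsets, S' ⊆ ℕ a non-empty finite subset and C' > 0. Suppose ∑_{s<t, s,t∈S'} μ(E_s ∩ E_t) ≤ C' (∑_{i∈S'} μ(E_i))² (where an empty sum is 0). Then there exists m ∈ S' such that, writing S'_{≠m} = S' \ {m}, one has ∑_{s<t, s,t∈S'_{≠m}} μ(E_s ∩ E_t) ≤ C' (∑_{i∈S'_{≠m}} μ(E_i))². -/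
open MeasureTheory

/-- **Reduction lemma**: one element can be removed from a finite index set while keeping
the quasi-independence-on-average inequality. -/
theorem reduction_lemma
    {X : Type*} [MeasurableSpace X] (μ : Measure X) [IsProbabilityMeasure μ]
    (E : ℕ → Set X) (hE : ∀ i, MeasurableSet (E i))
    (S : Finset ℕ) (hS : S.Nonempty) (C' : ℝ) (hC' : 0 < C')
    (h : ∑ s ∈ S, ∑ t ∈ S, (if s < t then (μ (E s ∩ E t)).toReal else 0)
      ≤ C' * (∑ i ∈ S, (μ (E i)).toReal) ^ 2) :
    ∃ m ∈ S,
      ∑ s ∈ S.erase m, ∑ t ∈ S.erase m, (if s < t then (μ (E s ∩ E t)).toReal else 0)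
        ≤ C' * (∑ i ∈ S.erase m, (μ (E i)).toReal) ^ 2 := by
  classical
  set a : ℕ → ℝ := fun i => (μ (E i)).toReal with ha
  set p : ℕ → ℕ → ℝ := fun s t => if s < t then (μ (E s ∩ E t)).toReal else 0 with hp
  by_cases hcard : S.card = 1
  · obtain ⟨m, hm⟩ := Finset.card_eq_one.mp hcard
    refine ⟨m, by simp [hm], ?_⟩
    simp only [hm, Finset.erase_singleton, Finset.sum_empty]
    positivity
  · have hn : 2 ≤ S.card := by
      have := Finset.card_pos.mpr hS
      omega
    set n : ℝ := (S.card : ℝ) with hndef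
    set T : ℝ := ∑ i ∈ S, a i with hT
    set P : ℝ := ∑ s ∈ S, ∑ t ∈ S, p s t with hP
    have hdiag : ∀ m, p m m = 0 := fun m => by simp [hp]
    have hf : ∀ m ∈ S, ∑ s ∈ S.erase m, ∑ t ∈ S.erase m, p s t
        = P - (∑ t ∈ S, p m t) - (∑ s ∈ S, p s m) := by
      intro m hm
      have hinner : ∀ s, ∑ t ∈ S.erase m, p s t = (∑ t ∈ S, p s t) - p s m :=
        fun s => Finset.sum_erase_eq_sub hm
      rw [Finset.sum_erase_eq_sub hm]
      simp_rw [hinner]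
      rw [Finset.sum_sub_distrib, hdiag m]
      ring
    have hsumf : ∑ m ∈ S, (∑ s ∈ S.erase m, ∑ t ∈ S.erase m, p s t) = (n - 2) * P := by
      rw [Finset.sum_congr rfl hf]
      have h1 : ∑ m ∈ S, ∑ s ∈ S, p s m = P := Finset.sum_comm
      have h2 : ∑ m ∈ S, ∑ t ∈ S, p m t = P := rfl
      rw [Finset.sum_sub_distrib, Finset.sum_sub_distrib, Finset.sum_const, h1, h2,
        nsmul_eq_mul]
      ring
    have hsumg : ∑ m ∈ S, (T - a m) ^ 2 = (n - 2) * T ^ 2 + ∑ m ∈ S, a m ^ 2 := by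
      have hexp : ∀ m, (T - a m) ^ 2 = T ^ 2 - 2 * T * a m + a m ^ 2 := fun m => by ring
      simp_rw [hexp]
      rw [Finset.sum_add_distrib, Finset.sum_sub_distrib, Finset.sum_const,
        ← Finset.mul_sum, ← hT, nsmul_eq_mul]
      ring
    have hsq_nonneg : 0 ≤ ∑ m ∈ S, a m ^ 2 :=
      Finset.sum_nonneg fun m _ => sq_nonneg _
    have hkey : ∑ m ∈ S, (∑ s ∈ S.erase m, ∑ t ∈ S.erase m, p s t)
        ≤ ∑ m ∈ S, C' * (∑ i ∈ S.erase m, a i) ^ 2 := by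
      have hrw : ∀ m ∈ S, C' * (∑ i ∈ S.erase m, a i) ^ 2 = C' * (T - a m) ^ 2 := by
        intro m hm
        rw [Finset.sum_erase_eq_sub hm]
      rw [Finset.sum_congr rfl hrw, ← Finset.mul_sum, hsumg, hsumf]
      have hn2 : (0:ℝ) ≤ n - 2 := by
        have : (2:ℝ) ≤ n := by rw [hndef]; exact_mod_cast hn
        linarith
      calc (n - 2) * P ≤ (n - 2) * (C' * T ^ 2) := by
            exact mul_le_mul_of_nonneg_left h hn2
        _ ≤ C' * ((n - 2) * T ^ 2 + ∑ m ∈ S, a m ^ 2) := by nlinarith [sq_nonneg T]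
    obtain ⟨m, hm, hle⟩ := Finset.exists_le_of_sum_le hS hkey
    exact ⟨m, hm, hle⟩
end

section
/- Cassels' Lemma: Let (I_j)_{j∈ℕ} be a sequence of intervals in ℝ such that |I_j| → 0 as j → ∞, and let U_j ⊆ I_j be a sequence of Lebesgue measurable sets. Suppose that for some c > 0 one has μ(U_j) ≥ c |I_j| for all j, where μ denotes Lebesgue measure and |I| the length of an interval I. Then the sets limsup_{j→∞} I_j and limsup_{j→∞} U_j have the same Lebesgue measure. -/
/-!
Fix `t` and let `S` be the set of points of `limsup I` lying in no `U j` with `j ≥ t`. A point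
`x ∈ S` lies in intervals `I j` with `j ≥ t` of arbitrarily small positive length `L`; the ball
of radius `L` about `x` contains `I j`, hence `U j`, which `S` misses, so `S` has density at most
`1 - c / 2` in that ball. By the Lebesgue density theorem `S` is null, and `limsup I \ limsup U`
is covered by these sets together with the null union of the null intervals.
-/

open MeasureTheory Filter Set Metric
open scoped ENNReal Topology

theorem Besicovitch.measure_eq_zero_of_frequently_le_mul {β : Type*} [MetricSpace β]
    [MeasurableSpace β] [BorelSpace β] [SecondCountableTopology β] [HasBesicovitchCovering β]
    (μ : Measure β) [IsLocallyFiniteMeasure μ] {s : Set β} {q : ℝ≥0∞} (hq : q < 1)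
    (h : ∀ x ∈ s, ∃ᶠ r in 𝓝[>] 0, μ (s ∩ closedBall x r) ≤ q * μ (closedBall x r)) :
    μ s = 0 := by
  have hnot : s ⊆ {x | ¬Tendsto (fun r => μ (s ∩ closedBall x r) / μ (closedBall x r))
      (𝓝[>] 0) (𝓝 1)} := fun x hx hlim =>
    (h x hx).and_eventually (hlim.eventually (eventually_gt_nhds hq)) |>.exists.elim
      fun _ ⟨hle, hgt⟩ => (ENNReal.div_le_of_le_mul hle).not_gt hgt
  rw [← Measure.restrict_apply_self μ s]
  exact measure_mono_null hnot (ae_iff.1 (ae_tendsto_measure_inter_div μ s))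

theorem Set.OrdConnected.subset_closedBall_toReal_volume {s : Set ℝ} (hs : s.OrdConnected)
    (hfin : volume s ≠ ∞) {x : ℝ} (hx : x ∈ s) : s ⊆ closedBall x (volume s).toReal := by
  intro y hy
  have : ENNReal.ofReal |y - x| ≤ volume s := by
    rw [← Real.volume_interval]
    exact measure_mono (hs.uIcc_subset hx hy)
  rw [mem_closedBall, Real.dist_eq]
  exact (ENNReal.ofReal_le_iff_le_toReal hfin).1 this

theorem volume_inter_closedBall_le_of_disjoint {I U E : Set ℝ} {x c : ℝ} (hc : 0 ≤ c)
    (hI : I.OrdConnected) (hfin : volume I ≠ ∞) (hx : x ∈ I) (hUI : U ⊆ I)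
    (hU : NullMeasurableSet U volume) (hcU : ENNReal.ofReal c * volume I ≤ volume U)
    (hEU : Disjoint E U) :
    volume (E ∩ closedBall x (volume I).toReal)
      ≤ ENNReal.ofReal (1 - c / 2) * volume (closedBall x (volume I).toReal) := by
  set L := (volume I).toReal
  have hL : 0 ≤ L := ENNReal.toReal_nonneg
  have hIL : volume I = ENNReal.ofReal L := (ENNReal.ofReal_toReal hfin).symm
  have hUball : U ⊆ closedBall x L := hUI.trans (hI.subset_closedBall_toReal_volume hfin hx)
  calc volume (E ∩ closedBall x L)
      ≤ volume (closedBall x L \ U) :=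
        measure_mono fun y hy => ⟨hy.2, hEU.notMem_of_mem_left hy.1⟩
    _ = ENNReal.ofReal (2 * L) - volume U := by
        rw [measure_sdiff hUball hU (measure_ne_top_of_subset hUI hfin), Real.volume_closedBall]
    _ ≤ ENNReal.ofReal (2 * L) - ENNReal.ofReal (c * L) := by
        rw [ENNReal.ofReal_mul hc, ← hIL]
        exact tsub_le_tsub_left hcU _
    _ = ENNReal.ofReal (1 - c / 2) * volume (closedBall x L) := by
        rw [Real.volume_closedBall, ← ENNReal.ofReal_mul' (by positivity),
          ← ENNReal.ofReal_sub _ (by positivity)]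
        ring_nf

theorem volume_eq_zero_of_frequently_disjoint {I U : ℕ → Set ℝ} {s : Set ℝ} {c : ℝ} (hc : 0 < c)
    (hI : ∀ j, (I j).OrdConnected) (hlen : Tendsto (fun j => volume (I j)) atTop (𝓝 0))
    (hUI : ∀ j, U j ⊆ I j) (hUmeas : ∀ j, NullMeasurableSet (U j) volume)
    (hcU : ∀ j, ENNReal.ofReal c * volume (I j) ≤ volume (U j))
    (hs : ∀ x ∈ s, ∃ᶠ j in atTop, x ∈ I j ∧ volume (I j) ≠ 0 ∧ Disjoint s (U j)) :
    volume s = 0 := by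
  have hq : ENNReal.ofReal (1 - c / 2) < 1 := by
    rw [← ENNReal.ofReal_one]
    exact (ENNReal.ofReal_lt_ofReal_iff one_pos).2 (by linarith)
  refine Besicovitch.measure_eq_zero_of_frequently_le_mul volume hq fun x hx => ?_
  refine frequently_iff.2 fun {V} hV => ?_
  obtain ⟨δ, hδ, hδV⟩ := mem_nhdsGT_iff_exists_Ioo_subset.1 hV
  have hsmall : ∀ᶠ j in atTop, volume (I j) < ENNReal.ofReal δ :=
    hlen.eventually (eventually_lt_nhds (ENNReal.ofReal_pos.2 hδ))
  obtain ⟨j, ⟨hxj, hpos, hdisj⟩, hjδ⟩ := ((hs x hx).and_eventually hsmall).exists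
  have hfin : volume (I j) ≠ ∞ := (hjδ.trans ENNReal.ofReal_lt_top).ne
  refine ⟨(volume (I j)).toReal, hδV ⟨ENNReal.toReal_pos hpos hfin, ?_⟩, ?_⟩
  · exact (ENNReal.lt_ofReal_iff_toReal_lt hfin).1 hjδ
  · exact volume_inter_closedBall_le_of_disjoint hc.le (hI j) hfin hxj (hUI j) (hUmeas j)
      (hcU j) hdisj

/-- **Cassels' Lemma**: if each `U j` occupies a fixed positive proportion of the interval
`I j` and the lengths of the intervals tend to `0`, then the limsup sets of the `I j` and
of the `U j` have the same Lebesgue measure. -/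
theorem cassels_lemma
    (I U : ℕ → Set ℝ)
    (hI : ∀ j, (I j).OrdConnected)
    (hlen : Tendsto (fun j => volume (I j)) atTop (nhds 0))
    (hUI : ∀ j, U j ⊆ I j)
    (hUmeas : ∀ j, NullMeasurableSet (U j) volume)
    (c : ℝ) (hc : 0 < c)
    (hcU : ∀ j, ENNReal.ofReal c * volume (I j) ≤ volume (U j)) :
    volume (limsup I atTop) = volume (limsup U atTop) := by
  set N := ⋃ j ∈ {j | volume (I j) = 0}, I j
  have hN : volume N = 0 := (measure_biUnion_null_iff (to_countable _)).2 fun _ hj => hj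
  set S : ℕ → Set ℝ := fun t => {x ∈ limsup I atTop \ N | ∀ j ≥ t, x ∉ U j}
  have hS : ∀ t, volume (S t) = 0 := fun t =>
    volume_eq_zero_of_frequently_disjoint hc hI hlen hUI hUmeas hcU fun x ⟨⟨hxI, hxN⟩, _⟩ =>
      ((mem_limsup_iff_frequently_mem.1 hxI).and_eventually (eventually_ge_atTop t)).mono
        fun j ⟨hxj, hjt⟩ => ⟨hxj, fun h0 => hxN (mem_biUnion h0 hxj),
          disjoint_left.2 fun _ hy => hy.2 j hjt⟩
  have hcover : limsup I atTop \ limsup U atTop ⊆ N ∪ ⋃ t, S t := by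
    rintro x ⟨hxI, hxU⟩
    by_cases hxN : x ∈ N
    · exact Or.inl hxN
    · rw [mem_limsup_iff_frequently_mem, not_frequently, eventually_atTop] at hxU
      obtain ⟨t, ht⟩ := hxU
      exact Or.inr (mem_iUnion.2 ⟨t, ⟨hxI, hxN⟩, ht⟩)
  refine le_antisymm (measure_mono_ae (ae_le_set.2 (measure_mono_null hcover ?_)))
    (measure_mono (limsup_le_limsup (Eventually.of_forall hUI)))
  exact measure_union_null hN (measure_iUnion_null hS)
end

section
/- Dichotomy for large approximating functions: Let ψ: ℕ → ℝ_{≥0} be such that ψ(q)/q → 0 as q → ∞, and fix δ > 0 such that ψ(q) ≥ δ for every q ∈ ℕ with ψ(q) ≠ 0. Let I_q ⊆ Z_q be an arbitrary sequence of subsets. Then the following are equivalent: (∃) there exists γ ∈ ℝ such that μ(limsup_{q→∞} E_q^I(γ,ψ)) = 1; (∀) for every γ ∈ ℝ one has μ(limsup_{q→∞} E_q^I(γ,ψ)) = 1. -/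
open MeasureTheory Filter

/-- Distance from a real number to the nearest integer. -/
noncomputable def natDist (x : ℝ) : ℝ := |x - (round x : ℝ)|

/-- The set `E_q^I(γ, ψ)` of points `x ∈ [0,1]` with `‖x - (a+γ)/q‖ ≤ ψ(q)/q`
for some `a ∈ I_q`. -/
noncomputable def EsetI (I : ℕ → Finset ℕ) (γ : ℝ) (ψ : ℕ → ℝ) (q : ℕ) : Set ℝ :=
  {x ∈ Set.Icc (0 : ℝ) 1 | ∃ a ∈ I q, natDist (x - ((a : ℝ) + γ) / q) ≤ ψ q / q}

open Set Metric
open scoped Topology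

/-!
`E_q^I(γ, ψ)` is `[0,1]` intersected with the closed `ψ(q)/q`-neighbourhood of the finite union
of lattices `(a + γ)/q + ℤ`, `a ∈ I_q`. By the Cassels-type lemma `blimsup_cthickening_mul_ae_eq`
(a Lebesgue density argument) halving all radii changes the limsup set only by a null set.
Since `ψ(q) ≥ δ` wherever `ψ(q) ≠ 0`, a shift `|t| ≤ δ/2` of `γ` moves every centre by at most
`ψ(q)/(2q)`, so the halved neighbourhoods for `γ` lie in the full ones for `γ + t`; the indices
with `ψ(q) = 0` only contribute countable sets. So the limsup set for `γ` is almost contained in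
the one for `γ + t`, and, `ℝ` being connected, its class modulo null sets does not depend on `γ`.
-/

theorem MeasureTheory.limsup_ae_eq_blimsup {α : Type*} [MeasurableSpace α] {μ : Measure α}
    {u : ℕ → Set α} {p : ℕ → Prop} (h : ∀ i, ¬p i → μ (u i) = 0) :
    (limsup u atTop : Set α) =ᵐ[μ] (blimsup u atTop p : Set α) := by
  have hnull : μ (blimsup u atTop fun i => ¬p i) = 0 := by
    refine measure_mono_null ?_ (measure_iUnion_null fun i => measure_iUnion_null (h i))
    rw [blimsup_eq_iInf_biSup_of_nat]
    exact (iInf_le _ 0).trans (iSup₂_le fun i hi => le_iSup₂_of_le i hi.1 le_rfl)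
  have hsplit : limsup u atTop = blimsup u atTop p ∪ blimsup u atTop fun i => ¬p i := by
    simpa only [em, blimsup_true, sup_eq_union] using
      blimsup_or_eq_sup (u := u) (f := atTop) (p := p) (q := fun i => ¬p i)
  exact (EventuallyEq.of_eq hsplit).trans (union_ae_eq_left_of_ae_eq_empty (ae_eq_empty.2 hnull))

lemma natDist_le_iff {y r : ℝ} : natDist y ≤ r ↔ ∃ m : ℤ, |y - m| ≤ r :=
  ⟨fun h => ⟨round y, h⟩, fun ⟨m, hm⟩ => (round_le y m).trans hm⟩

def approxCenters (I : ℕ → Finset ℕ) (γ : ℝ) (q : ℕ) : Set ℝ :=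
  ⋃ a ∈ I q, range fun m : ℤ => ((a : ℝ) + γ) / q + m

section approxCenters

variable (I : ℕ → Finset ℕ) (γ : ℝ) (q : ℕ)

lemma isClosed_approxCenters : IsClosed (approxCenters I γ q) := by
  refine (I q).finite_toSet.isClosed_biUnion fun a _ => ?_
  have := (Homeomorph.addLeft (((a : ℝ) + γ) / q)).isClosedMap _
    Int.isClosedEmbedding_coe_real.isClosed_range
  rwa [← range_comp] at this

lemma countable_approxCenters : (approxCenters I γ q).Countable :=
  (I q).countable_toSet.biUnion fun _ _ => countable_range _

lemma EsetI_eq_inter_cthickening {ψ : ℕ → ℝ} (hψ : 0 ≤ ψ q) :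
    EsetI I γ ψ q = Icc 0 1 ∩ cthickening (ψ q / q) (approxCenters I γ q) := by
  rw [(isClosed_approxCenters I γ q).cthickening_eq_biUnion_closedBall (by positivity)]
  ext x
  simp only [EsetI, approxCenters, natDist_le_iff, mem_ofPred_eq, mem_inter_iff, mem_iUnion,
    mem_closedBall, Real.dist_eq, exists_prop, sub_sub]
  refine and_congr_right fun _ => ⟨fun ⟨a, ha, m, hm⟩ => ⟨_, ⟨a, ha, m, rfl⟩, hm⟩, ?_⟩
  rintro ⟨_, ⟨a, ha, m, rfl⟩, hm⟩
  exact ⟨a, ha, m, hm⟩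

lemma approxCenters_subset_cthickening_shift (t : ℝ) :
    approxCenters I γ q ⊆ cthickening (|t| / q) (approxCenters I (γ + t) q) := by
  simp only [approxCenters, subset_def, mem_iUnion, exists_prop, mem_range]
  rintro _ ⟨a, ha, m, rfl⟩
  refine mem_cthickening_of_dist_le _ (((a : ℝ) + (γ + t)) / q + m) _ _
    (mem_biUnion ha ⟨m, rfl⟩) (le_of_eq ?_)
  rw [Real.dist_eq, show ((a : ℝ) + γ) / q + m - (((a : ℝ) + (γ + t)) / q + m) = -(t / q) by ring,
    abs_neg, abs_div, Nat.abs_cast]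

lemma cthickening_half_approxCenters_subset {r t : ℝ} (hr : 0 ≤ r) (ht : |t| / q ≤ r / 2) :
    cthickening (1 / 2 * r) (approxCenters I γ q) ⊆ cthickening r (approxCenters I (γ + t) q) :=
  calc cthickening (1 / 2 * r) (approxCenters I γ q)
      ⊆ cthickening (1 / 2 * r) (cthickening (|t| / q) (approxCenters I (γ + t) q)) :=
        cthickening_subset_of_subset _ (approxCenters_subset_cthickening_shift I γ q t)
    _ ⊆ cthickening (1 / 2 * r + |t| / q) (approxCenters I (γ + t) q) :=
        cthickening_cthickening_subset (by positivity) (by positivity) _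
    _ ⊆ cthickening r (approxCenters I (γ + t) q) := cthickening_mono (by linarith) _

end approxCenters

def approxLimsup (ψ : ℕ → ℝ) (I : ℕ → Finset ℕ) (γ : ℝ) : Set ℝ :=
  limsup (fun q => cthickening (ψ q / q) (approxCenters I γ q)) atTop

section shift

variable {ψ : ℕ → ℝ} (hψ0 : ∀ q, 0 ≤ ψ q) (hψq : Tendsto (fun q => ψ q / q) atTop (𝓝 0))
  {δ : ℝ} (hψδ : ∀ q, ψ q ≠ 0 → δ ≤ ψ q) (I : ℕ → Finset ℕ)
include hψ0 hψq hψδ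

lemma approxLimsup_ae_le_add {t : ℝ} (ht : |t| ≤ δ / 2) (γ : ℝ) :
    approxLimsup ψ I γ ≤ᵐ[volume] approxLimsup ψ I (γ + t) := by
  have hnull : ∀ q, ¬ψ q ≠ 0 → volume (cthickening (ψ q / q) (approxCenters I γ q)) = 0 := by
    intro q hq
    rw [not_not.1 hq, zero_div, cthickening_zero, (isClosed_approxCenters I γ q).closure_eq]
    exact (countable_approxCenters I γ q).measure_zero _
  have hsub : ∀ q, ψ q ≠ 0 → cthickening (1 / 2 * (ψ q / q)) (approxCenters I γ q) ⊆
      cthickening (ψ q / q) (approxCenters I (γ + t) q) := by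
    intro q hq
    refine cthickening_half_approxCenters_subset I γ q (div_nonneg (hψ0 q) q.cast_nonneg) ?_
    rw [div_right_comm]
    exact div_le_div_of_nonneg_right (by linarith [hψδ q hq]) q.cast_nonneg
  refine (limsup_ae_eq_blimsup hnull).trans_le ?_
  refine (blimsup_cthickening_mul_ae_eq volume _ _ one_half_pos _ hψq).symm.trans_le ?_
  exact .of_forall <|
    (mono_blimsup hsub).trans ((blimsup_mono fun _ _ => trivial).trans_eq (blimsup_true atTop _))

lemma approxLimsup_ae_eq (hδ : 0 < δ) (γ γ' : ℝ) :
    approxLimsup ψ I γ =ᵐ[volume] approxLimsup ψ I γ' := by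
  refine PreconnectedSpace.induction₂'
    (fun γ γ' => approxLimsup ψ I γ =ᵐ[volume] approxLimsup ψ I γ') (fun γ => ?_)
    ⟨fun _ _ _ => EventuallyEq.trans⟩ γ γ'
  filter_upwards [closedBall_mem_nhds γ (half_pos hδ)] with γ' hγ'
  have hdist : |γ' - γ| ≤ δ / 2 := hγ'
  have hle := approxLimsup_ae_le_add hψ0 hψq hψδ I hdist γ
  have hge := approxLimsup_ae_le_add hψ0 hψq hψδ I
    ((abs_sub_comm γ γ').trans_le hdist) γ'
  rw [add_sub_cancel] at hle hge
  exact ⟨hle.antisymm hge, hge.antisymm hle⟩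

end shift

lemma limsup_EsetI_eq {ψ : ℕ → ℝ} (hψ0 : ∀ q, 0 ≤ ψ q) (I : ℕ → Finset ℕ) (γ : ℝ) :
    limsup (EsetI I γ ψ) atTop = Icc 0 1 ∩ approxLimsup ψ I γ := by
  rw [show EsetI I γ ψ = _ from funext fun q => EsetI_eq_inter_cthickening I γ q (hψ0 q)]
  exact (inf_limsup _).symm

theorem dichotomy_large_psi_general
    (ψ : ℕ → ℝ) (hψ0 : ∀ q, 0 ≤ ψ q)
    (hψq : Tendsto (fun q => ψ q / q) atTop (nhds 0))
    (δ : ℝ) (hδ : 0 < δ) (hψδ : ∀ q, ψ q ≠ 0 → δ ≤ ψ q)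
    (I : ℕ → Finset ℕ) :
    (∃ γ : ℝ, volume (limsup (fun q => EsetI I γ ψ q) atTop) = 1) ↔
      ∀ γ : ℝ, volume (limsup (fun q => EsetI I γ ψ q) atTop) = 1 := by
  have hindep : ∀ γ γ', volume (limsup (EsetI I γ ψ) atTop) =
      volume (limsup (EsetI I γ' ψ) atTop) := fun γ γ' => by
    rw [limsup_EsetI_eq hψ0, limsup_EsetI_eq hψ0]
    exact measure_congr (EventuallyEq.rfl.inter (approxLimsup_ae_eq hψ0 hψq hψδ I hδ γ γ'))
  exact ⟨fun ⟨γ, hγ⟩ γ' => (hindep γ' γ).trans hγ, fun h => ⟨0, h 0⟩⟩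

/-- **Dichotomy for large approximating functions** (Theorem `dichotomy`): if `ψ(q)/q → 0`
and `ψ` is bounded below by `δ > 0` on its support, then the limsup set has full Lebesgue
measure for some shift `γ` if and only if it has full measure for every shift `γ`. -/
theorem dichotomy_large_psi
    (ψ : ℕ → ℝ) (hψ0 : ∀ q, 0 ≤ ψ q)
    (hψq : Tendsto (fun q => ψ q / q) atTop (nhds 0))
    (δ : ℝ) (hδ : 0 < δ) (hψδ : ∀ q, ψ q ≠ 0 → δ ≤ ψ q)
    (I : ℕ → Finset ℕ) (hI : ∀ q, ∀ a ∈ I q, a < q) :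
    (∃ γ : ℝ, volume (limsup (fun q => EsetI I γ ψ q) atTop) = 1) ↔
      ∀ γ : ℝ, volume (limsup (fun q => EsetI I γ ψ q) atTop) = 1 :=
  dichotomy_large_psi_general ψ hψ0 hψq δ hδ hψδ I
end

section
/- Let (X, 𝒜, μ, T) be a measure-preserving dynamical system on a probability space satisfying the uniform mixing property (U1): for any A ∈ 𝒜 there exist a sequence ε_n > 0 with ε_n → 0 and an n₀ ∈ ℕ (both possibly depending on A) such that for all n ≥ n₀ and every B ∈ 𝒜, μ(A ∩ T^{−n}(B)) ≤ μ(A)μ(B) + ε_n μ(B). Then every sequence {A_n}_{n∈ℕ} of measurable sets with limsup_{n→∞} μ(A_n) > 0 is a Borel–Cantelli sequence, i.e. μ(limsup_{n→∞} T^{−n}(A_n)) = 1. -/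
open MeasureTheory Filter

/-!
If the limsup set `E` of the `T^{-n}(A_n)` had measure `< 1`, some tail intersection
`C = ⋂_{n ≥ t} T^{-n}(A_n)ᶜ` would have positive measure. Apply (U1) to `Cᶜ`: for `n ≥ t` the set
`T^{-n}(A_n)` lies in `Cᶜ`, so `μ(A_n) = μ(Cᶜ ∩ T^{-n}(A_n)) ≤ (μ(Cᶜ) + ε_n) μ(A_n)`, and as
`μ(Cᶜ) + ε_n < 1` for large `n`, this forces `μ(A_n) = 0` eventually, contradicting
`limsup μ(A_n) > 0`.
-/

theorem ENNReal.eq_zero_of_le_mul_of_lt_one {x c : ENNReal} (hx : x ≠ ⊤) (hc : c < 1)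
    (h : x ≤ c * x) : x = 0 := by
  by_contra hx0
  have : x * c < x * 1 := ENNReal.mul_lt_mul_right hx0 hx hc
  rw [mul_comm x c, mul_one] at this
  exact (h.trans_lt this).false

theorem exists_measure_iInter_compl_ne_zero {α : Type*} [MeasurableSpace α] {μ : Measure α}
    {s : ℕ → Set α} (h : μ (limsup s atTop)ᶜ ≠ 0) : ∃ t, μ (⋂ n ≥ t, (s n)ᶜ) ≠ 0 := by
  rw [limsup_compl, liminf_eq_iSup_iInf_of_nat] at h
  contrapose! h
  exact measure_iUnion_null h

theorem eventually_measure_eq_zero_of_iterate_preimage_subset {X : Type*} [MeasurableSpace X]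
    {μ : Measure X} [IsFiniteMeasure μ] {T : X → X} (hT : MeasurePreserving T μ μ)
    {A : Set X} (hA : μ A < 1) {ε : ℕ → ℝ} {n₀ : ℕ} (hε : Tendsto ε atTop (nhds 0))
    (hmix : ∀ n ≥ n₀, ∀ B : Set X, MeasurableSet B →
      μ (A ∩ T^[n] ⁻¹' B) ≤ μ A * μ B + ENNReal.ofReal (ε n) * μ B) :
    ∀ᶠ n in atTop, ∀ B : Set X, MeasurableSet B → T^[n] ⁻¹' B ⊆ A → μ B = 0 := by
  have hlim : Tendsto (fun n => μ A + ENNReal.ofReal (ε n)) atTop (nhds (μ A)) := by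
    simpa using tendsto_const_nhds.add (ENNReal.tendsto_ofReal hε)
  filter_upwards [hlim.eventually (gt_mem_nhds hA), eventually_ge_atTop n₀]
    with n hlt hn B hB hsub
  refine ENNReal.eq_zero_of_le_mul_of_lt_one (measure_ne_top μ B) hlt ?_
  calc μ B = μ (T^[n] ⁻¹' B) := ((hT.iterate n).measure_preimage hB.nullMeasurableSet).symm
    _ = μ (A ∩ T^[n] ⁻¹' B) := by rw [Set.inter_eq_right.mpr hsub]
    _ ≤ μ A * μ B + ENNReal.ofReal (ε n) * μ B := hmix n hn B hB
    _ = (μ A + ENNReal.ofReal (ε n)) * μ B := (add_mul _ _ _).symm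

/-- **Dynamical Borel--Cantelli under uniform mixing (U1)** (Theorem 9): in a
measure-preserving system satisfying property (U1), every sequence of measurable targets
`A_n` with `limsup μ(A_n) > 0` is a Borel--Cantelli sequence. -/
theorem borel_cantelli_of_uniform_mixing
    {X : Type*} [MeasurableSpace X] (μ : Measure X) [IsProbabilityMeasure μ]
    (T : X → X) (hT : MeasurePreserving T μ μ)
    (hU1 : ∀ A : Set X, MeasurableSet A →
      ∃ (ε : ℕ → ℝ) (n₀ : ℕ), (∀ n, 0 < ε n) ∧ Tendsto ε atTop (nhds 0) ∧
        ∀ n ≥ n₀, ∀ B : Set X, MeasurableSet B →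
          μ (A ∩ T^[n] ⁻¹' B) ≤ μ A * μ B + ENNReal.ofReal (ε n) * μ B)
    (A : ℕ → Set X) (hA : ∀ n, MeasurableSet (A n))
    (hpos : 0 < limsup (fun n => μ (A n)) atTop) :
    μ (limsup (fun n => T^[n] ⁻¹' A n) atTop) = 1 := by
  set s : ℕ → Set X := fun n => T^[n] ⁻¹' A n
  have hs : ∀ n, MeasurableSet (s n) := fun n => (hT.iterate n).measurable (hA n)
  by_contra hne
  obtain ⟨t, ht⟩ := exists_measure_iInter_compl_ne_zero (μ := μ) (s := s)
    ((prob_compl_eq_zero_iff (MeasurableSet.measurableSet_limsup hs)).not.mpr hne)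
  set C := ⋂ n ≥ t, (s n)ᶜ
  have hC : MeasurableSet C := .biInter (Set.to_countable _) fun n _ => (hs n).compl
  obtain ⟨ε, n₀, -, hε, hmix⟩ := hU1 Cᶜ hC.compl
  have hCc : μ Cᶜ < 1 := prob_le_one.lt_of_ne ((prob_compl_eq_one_iff hC).not.mpr ht)
  have hnull : ∀ᶠ n in atTop, μ (A n) = 0 := by
    filter_upwards [eventually_measure_eq_zero_of_iterate_preimage_subset hT hCc hε hmix,
      eventually_ge_atTop t] with n hn hnt
    exact hn (A n) (hA n) fun x hx hxC => Set.mem_iInter₂.mp hxC n hnt hx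
  rw [limsup_congr hnull, limsup_const] at hpos
  exact hpos.ne rfl
end
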